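/- arXiv:1203.5384 — 4 statements merged into one kernel-verified Lean document; each statement's English description precedes it below -/
import Mathlib

section
/- Let H be a finite dimensional semisimple Hopf algebra over a field of characteristic 0 with left integral t satisfying ε(t) = 1, let B be a finite dimensional H-module algebra, I₁ an H-invariant two-sided ideal of B, and π : B → I₁ a projection satisfying π(ab) = aπ(b) = π(a)b for all a,b ∈ B. Define π̃(a) := t₍₁₎ · π((S t₍₂₎) · a). Then π̃ is a projection of B onto I₁ satisfying π̃(ab) = a π̃(b) = π̃(a) b for all a,b ∈ B, and π̃(h·a) = h·π̃(a) for all h ∈ H, a ∈ B; consequently ker π̃ is an H-invariant two-sided ideal with B = I₁ ⊕ ker π̃. -/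
/-!
A bimodule projection `π` onto `I` is multiplication by the central element `e = π 1`, the
identity element of `I`. In any `H`-module algebra `h₁ · (x · (S h₂ · a)) = (h · x) a`, so the
average of `π` over any `t` is `a ↦ (t · e) a`. Taking `x = a = e` and using `h · e ∈ I` gives
`h · e = ε(h) e`; hence the average of `π` is `ε(t) π = π`, and `π` commutes with the action
because `h · (e a) = (h₁ · e)(h₂ · a) = e (h · a)`.
-/

open TensorProduct
open Coalgebra

theorem Coalgebra.sum_counit_smul_left {R A ι : Type*} [CommSemiring R] [AddCommMonoid A]
    [Module R A] [Coalgebra R A] {a : A} (𝓡 : Repr R a ι) :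
    ∑ i ∈ 𝓡.index, counit (R := R) (𝓡.right i) • 𝓡.left i = a := by
  have h := congr(_root_.TensorProduct.rid R A $(sum_tmul_counit_eq (R := R) 𝓡))
  simpa only [map_sum, rid_tmul, one_smul] using h

theorem LinearMap.eq_mulLeft_apply_one {R B : Type*} [CommSemiring R] [Semiring B]
    [Algebra R B] {π : B →ₗ[R] B} (hr : ∀ a b, π (a * b) = π a * b) :
    π = LinearMap.mulLeft R (π 1) :=
  LinearMap.ext fun a ↦ by simpa using hr 1 a

section Bialgebra

variable {R H B ι : Type*} [CommSemiring R] [Semiring H] [Bialgebra R H] [Semiring B]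
  [Algebra R B]

def IsModuleAlgebra (ρ : H →ₐ[R] Module.End R B) : Prop :=
  ∀ (h : H) (a b : B), ρ h (a * b) = LinearMap.mul' R B
    ((homTensorHomMap (RingHom.id R) B B B B)
      ((map ρ.toLinearMap ρ.toLinearMap) (comul h)) (a ⊗ₜ[R] b))

namespace IsModuleAlgebra

variable {ρ : H →ₐ[R] Module.End R B}

theorem apply_mul (hρ : IsModuleAlgebra ρ) {h : H} (𝓡 : Repr R h ι) (a b : B) :
    ρ h (a * b) = ∑ i ∈ 𝓡.index, ρ (𝓡.left i) a * ρ (𝓡.right i) b := by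
  simp [hρ h, ← 𝓡.eq, map_sum]

theorem apply_mul_of_apply_eq_counit_smul (hρ : IsModuleAlgebra ρ) {e : B}
    (he : ∀ h : H, ρ h e = counit (R := R) h • e) (h : H) (a : B) :
    ρ h (e * a) = e * ρ h a := by
  conv_rhs => rw [← sum_counit_smul (ℛ R h)]
  simp [hρ.apply_mul (ℛ R h), he, map_sum, Finset.mul_sum, LinearMap.sum_apply]

end IsModuleAlgebra

end Bialgebra

section HopfAlgebra

variable {R H B ι : Type*} [CommSemiring R] [Semiring H] [HopfAlgebra R H] [Semiring B]
  [Algebra R B]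

local notation "S" => HopfAlgebra.antipode R

def hopfAverage (ρ : H →ₐ[R] Module.End R B) (π : B →ₗ[R] B) (t : H) : B →ₗ[R] B :=
  (lift (ρ.toLinearMap : H →ₗ[R] B →ₗ[R] B)) ∘ₗ
    (map LinearMap.id π) ∘ₗ
    (map LinearMap.id (lift (ρ.toLinearMap : H →ₗ[R] B →ₗ[R] B))) ∘ₗ
    (map LinearMap.id (map S LinearMap.id)) ∘ₗ
    (TensorProduct.assoc R H H B).toLinearMap ∘ₗ
    (mk R (H ⊗[R] H) B (comul t))

variable {ρ : H →ₐ[R] Module.End R B}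

theorem hopfAverage_apply (π : B →ₗ[R] B) {t : H} (𝓡 : Repr R t ι) (a : B) :
    hopfAverage ρ π t a = ∑ i ∈ 𝓡.index, ρ (𝓡.left i) (π (ρ (S (𝓡.right i)) a)) := by
  simp [hopfAverage, ← 𝓡.eq, map_sum]

theorem hopfAverage_apply_of_mem {I : Submodule R B} {π : B →ₗ[R] B}
    (hπ : ∀ x ∈ I, π x = x) (hI : ∀ h : H, ∀ x ∈ I, ρ h x ∈ I) (t : H) {x : B}
    (hx : x ∈ I) : hopfAverage ρ π t x = counit (R := R) t • x := by
  have hfix : ∀ y : H, π (ρ y x) = ρ y x := fun y ↦ hπ _ (hI y x hx)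
  simp_rw [hopfAverage_apply π (ℛ R t), hfix, ← Module.End.mul_apply, ← map_mul,
    ← LinearMap.sum_apply, ← map_sum, HopfAlgebra.sum_mul_antipode_eq_smul, map_smul, map_one]
  rfl

namespace IsModuleAlgebra

theorem hopfAverage_mulLeft (hρ : IsModuleAlgebra ρ) (h : H) (x a : B) :
    hopfAverage ρ (LinearMap.mulLeft R x) h a = ρ h x * a := by
  let 𝓡 := ℛ R h
  let Φ : H ⊗[R] (H ⊗[R] H) →ₗ[R] B := LinearMap.mul' R B ∘ₗ
    map (ρ.toLinearMap.flip x)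
      ((ρ.toLinearMap ∘ₗ LinearMap.mul' R H ∘ₗ LinearMap.lTensor H S).flip a)
  have hΦ : ∀ p q r, Φ (p ⊗ₜ (q ⊗ₜ r)) = ρ p x * ρ (q * S r) a := fun _ _ _ ↦ rfl
  have hcoassoc := congr(Φ $(sum_tmul_tmul_eq 𝓡
    (fun i ↦ ℛ R (𝓡.left i)) (fun i ↦ ℛ R (𝓡.right i))))
  simp only [map_sum, hΦ] at hcoassoc
  calc hopfAverage ρ (LinearMap.mulLeft R x) h a
    _ = ∑ i ∈ 𝓡.index, ∑ j ∈ (ℛ R (𝓡.left i)).index,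
          ρ ((ℛ R (𝓡.left i)).left j) x * ρ ((ℛ R (𝓡.left i)).right j * S (𝓡.right i)) a := by
        simp [hopfAverage_apply _ 𝓡, hρ.apply_mul (ℛ R (𝓡.left _)), Module.End.mul_apply]
    _ = ∑ i ∈ 𝓡.index, ∑ j ∈ (ℛ R (𝓡.right i)).index,
          ρ (𝓡.left i) x * ρ ((ℛ R (𝓡.right i)).left j * S ((ℛ R (𝓡.right i)).right j)) a :=
        hcoassoc
    _ = ∑ i ∈ 𝓡.index, ρ (counit (R := R) (𝓡.right i) • 𝓡.left i) x * a := by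
        simp_rw [← Finset.mul_sum, ← LinearMap.sum_apply, ← map_sum,
          HopfAlgebra.sum_mul_antipode_eq_smul, map_smul, map_one]
        simp only [LinearMap.smul_apply, Module.End.one_apply, mul_smul_comm, smul_mul_assoc]
    _ = ρ h x * a := by
        rw [← Finset.sum_mul, ← LinearMap.sum_apply, ← map_sum, sum_counit_smul_left]

variable {I : Submodule R B} {π : B →ₗ[R] B}

theorem apply_map_one (hρ : IsModuleAlgebra ρ) (hπ : LinearMap.IsProj I π)
    (hI : ∀ h : H, ∀ x ∈ I, ρ h x ∈ I) (hl : ∀ a b, π (a * b) = a * π b)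
    (hr : ∀ a b, π (a * b) = π a * b) (h : H) :
    ρ h (π 1) = counit (R := R) h • π 1 := by
  have hπ_eq := LinearMap.eq_mulLeft_apply_one hr
  calc ρ h (π 1)
    _ = ρ h (π 1) * π 1 := by rw [← hl, mul_one, hπ.map_id _ (hI h _ (hπ.map_mem 1))]
    _ = hopfAverage ρ π h (π 1) := by rw [hπ_eq, hρ.hopfAverage_mulLeft, ← hπ_eq]
    _ = counit (R := R) h • π 1 := hopfAverage_apply_of_mem hπ.map_id hI h (hπ.map_mem 1)

theorem hopfAverage_eq_counit_smul (hρ : IsModuleAlgebra ρ) (hπ : LinearMap.IsProj I π)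
    (hI : ∀ h : H, ∀ x ∈ I, ρ h x ∈ I) (hl : ∀ a b, π (a * b) = a * π b)
    (hr : ∀ a b, π (a * b) = π a * b) (t : H) :
    hopfAverage ρ π t = counit (R := R) t • π := by
  have hπ_eq := LinearMap.eq_mulLeft_apply_one hr
  ext a
  have h_avg := hρ.hopfAverage_mulLeft t (π 1) a
  rw [← hπ_eq] at h_avg
  rw [h_avg, hρ.apply_map_one hπ hI hl hr, LinearMap.smul_apply, smul_mul_assoc, ← hr, one_mul]

theorem map_apply_comm (hρ : IsModuleAlgebra ρ) (hπ : LinearMap.IsProj I π)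
    (hI : ∀ h : H, ∀ x ∈ I, ρ h x ∈ I) (hl : ∀ a b, π (a * b) = a * π b)
    (hr : ∀ a b, π (a * b) = π a * b) (h : H) (a : B) :
    π (ρ h a) = ρ h (π a) := by
  rw [LinearMap.eq_mulLeft_apply_one hr]
  exact (hρ.apply_mul_of_apply_eq_counit_smul (hρ.apply_map_one hπ hI hl hr) h a).symm

end IsModuleAlgebra

end HopfAlgebra

theorem hopf_maschke_projection_general (F : Type*) [Field F]
    (H : Type*) [Ring H] [HopfAlgebra F H]
    (B : Type*) [Ring B] [Algebra F B]
    -- the `H`-module algebra structure on `B`: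
    (ρ : H →ₐ[F] Module.End F B)
    (hmod : ∀ (h : H) (a b : B),
      ρ h (a * b) = LinearMap.mul' F B
        ((TensorProduct.homTensorHomMap (RingHom.id F) B B B B)
          ((TensorProduct.map ρ.toLinearMap ρ.toLinearMap) (Coalgebra.comul h))
          (a ⊗ₜ[F] b)))
    -- a left integral with ε(t) = 1:
    (t : H)
    (hεt : Coalgebra.counit (R := F) t = 1)
    -- an `H`-invariant two-sided ideal `I₁`:
    (I₁ : Submodule F B)
    (hI₁inv : ∀ (h : H), ∀ x ∈ I₁, ρ h x ∈ I₁)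
    -- a projection `π` of `B` onto `I₁` which is a bimodule map:
    (π : B →ₗ[F] B)
    (hπrange : ∀ a : B, π a ∈ I₁)
    (hπid : ∀ x ∈ I₁, π x = x)
    (hπbimod : ∀ a b : B, π (a * b) = a * π b ∧ π (a * b) = π a * b) :
    -- the averaged projection `π̃(a) = t₍₁₎ · π((S t₍₂₎) · a)`:
    ∀ πt : B →ₗ[F] B,
      πt = (TensorProduct.lift (ρ.toLinearMap : H →ₗ[F] B →ₗ[F] B)) ∘ₗ
        (TensorProduct.map LinearMap.id π) ∘ₗ
        (TensorProduct.map LinearMap.id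
          (TensorProduct.lift (ρ.toLinearMap : H →ₗ[F] B →ₗ[F] B))) ∘ₗ
        (TensorProduct.map LinearMap.id
          (TensorProduct.map (HopfAlgebra.antipode (R := F)) LinearMap.id)) ∘ₗ
        (TensorProduct.assoc F H H B).toLinearMap ∘ₗ
        (TensorProduct.mk F (H ⊗[F] H) B (Coalgebra.comul t)) →
      (∀ a : B, πt a ∈ I₁) ∧
      (∀ x ∈ I₁, πt x = x) ∧
      (∀ a b : B, πt (a * b) = a * πt b ∧ πt (a * b) = πt a * b) ∧
      (∀ (h : H) (a : B), πt (ρ h a) = ρ h (πt a)) ∧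
      (∀ b : B, ∀ x ∈ LinearMap.ker πt, b * x ∈ LinearMap.ker πt ∧
        x * b ∈ LinearMap.ker πt) ∧
      (∀ (h : H), ∀ x ∈ LinearMap.ker πt, ρ h x ∈ LinearMap.ker πt) ∧
      IsCompl I₁ (LinearMap.ker πt) := by
  intro πt hπt
  have hρ : IsModuleAlgebra ρ := hmod
  have hπ : LinearMap.IsProj I₁ π := ⟨hπrange, hπid⟩
  have hl : ∀ a b, π (a * b) = a * π b := fun a b ↦ (hπbimod a b).1
  have hr : ∀ a b, π (a * b) = π a * b := fun a b ↦ (hπbimod a b).2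
  obtain rfl : πt = π := by
    rw [hπt.trans (hρ.hopfAverage_eq_counit_smul hπ hI₁inv hl hr t), hεt, one_smul]
  refine ⟨hπrange, hπid, hπbimod, hρ.map_apply_comm hπ hI₁inv hl hr,
    fun b x hx ↦ ⟨?_, ?_⟩, fun h x hx ↦ ?_, hπ.isCompl⟩ <;>
    rw [LinearMap.mem_ker] at hx ⊢
  · rw [hl, hx, mul_zero]
  · rw [hr, hx, zero_mul]
  · rw [hρ.map_apply_comm hπ hI₁inv hl hr, hx, map_zero]

/-- Maschke-type trick for `H`-module algebras: given a left integral `t` with `ε(t) = 1`,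
an `H`-invariant two-sided ideal `I₁` of an `H`-module algebra `B`, and a `B`-bimodule
projection `π` of `B` onto `I₁`, the averaged map `π̃(a) = t₍₁₎ · π((S t₍₂₎) · a)` is a
`B`-bimodule and `H`-equivariant projection onto `I₁`, its kernel is an `H`-invariant
two-sided ideal, and `B = I₁ ⊕ ker π̃`. -/
theorem hopf_maschke_projection (F : Type*) [Field F] [CharZero F]
    (H : Type*) [Ring H] [HopfAlgebra F H] [FiniteDimensional F H] [IsSemisimpleRing H]
    (B : Type*) [Ring B] [Algebra F B] [FiniteDimensional F B]
    -- the `H`-module algebra structure on `B`: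
    (ρ : H →ₐ[F] Module.End F B)
    (hmod : ∀ (h : H) (a b : B),
      ρ h (a * b) = LinearMap.mul' F B
        ((TensorProduct.homTensorHomMap (RingHom.id F) B B B B)
          ((TensorProduct.map ρ.toLinearMap ρ.toLinearMap) (Coalgebra.comul h))
          (a ⊗ₜ[F] b)))
    -- a left integral with ε(t) = 1:
    (t : H) (ht : ∀ h : H, h * t = Coalgebra.counit (R := F) h • t)
    (hεt : Coalgebra.counit (R := F) t = 1)
    -- an `H`-invariant two-sided ideal `I₁`:
    (I₁ : Submodule F B)
    (hI₁ideal : ∀ b : B, ∀ x ∈ I₁, b * x ∈ I₁ ∧ x * b ∈ I₁)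
    (hI₁inv : ∀ (h : H), ∀ x ∈ I₁, ρ h x ∈ I₁)
    -- a projection `π` of `B` onto `I₁` which is a bimodule map:
    (π : B →ₗ[F] B)
    (hπrange : ∀ a : B, π a ∈ I₁)
    (hπid : ∀ x ∈ I₁, π x = x)
    (hπbimod : ∀ a b : B, π (a * b) = a * π b ∧ π (a * b) = π a * b) :
    -- the averaged projection `π̃(a) = t₍₁₎ · π((S t₍₂₎) · a)`:
    ∀ πt : B →ₗ[F] B,
      πt = (TensorProduct.lift (ρ.toLinearMap : H →ₗ[F] B →ₗ[F] B)) ∘ₗ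
        (TensorProduct.map LinearMap.id π) ∘ₗ
        (TensorProduct.map LinearMap.id
          (TensorProduct.lift (ρ.toLinearMap : H →ₗ[F] B →ₗ[F] B))) ∘ₗ
        (TensorProduct.map LinearMap.id
          (TensorProduct.map (HopfAlgebra.antipode (R := F)) LinearMap.id)) ∘ₗ
        (TensorProduct.assoc F H H B).toLinearMap ∘ₗ
        (TensorProduct.mk F (H ⊗[F] H) B (Coalgebra.comul t)) →
      (∀ a : B, πt a ∈ I₁) ∧
      (∀ x ∈ I₁, πt x = x) ∧
      (∀ a b : B, πt (a * b) = a * πt b ∧ πt (a * b) = πt a * b) ∧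
      (∀ (h : H) (a : B), πt (ρ h a) = ρ h (πt a)) ∧
      (∀ b : B, ∀ x ∈ LinearMap.ker πt, b * x ∈ LinearMap.ker πt ∧
        x * b ∈ LinearMap.ker πt) ∧
      (∀ (h : H), ∀ x ∈ LinearMap.ker πt, ρ h x ∈ LinearMap.ker πt) ∧
      IsCompl I₁ (LinearMap.ker πt) :=
  hopf_maschke_projection_general F H B ρ hmod t hεt I₁ hI₁inv π hπrange hπid hπbimod
end

section
/- Let H = span_F{1, c, b, cb} be Sweedler's 4-dimensional Hopf algebra over a field F of characteristic 0 (relations c² = 1, b² = 0, bc = -cb). Let H* act on H by g·h = g(h₍₂₎)h₍₁₎ where Δ(c) = c⊗c, Δ(b) = c⊗b + b⊗1. Then H is H*-simple: H has no H*-invariant two-sided ideal other than 0 and H. -/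
/-!
The coefficient of `cb` in `x` is read off by `g_{cb}` as a multiple of `1`; once it vanishes,
`g_b` reads off the coefficient of `b` as a multiple of `c`, and once both vanish `g_c` reads off
the coefficient of `c` as a multiple of `c`, while `x` itself is a multiple of `1` if all three vanish.
So a nonzero invariant ideal contains `1` or the unit `c`, hence everything.
-/

section

variable {F H : Type*} [Field F] [Ring H] [Algebra F H]

theorem Submodule.eq_top_of_mul_eq_one_of_mem {I : Submodule F H}
    (hmul : ∀ a : H, ∀ x ∈ I, a * x ∈ I) {u v : H} (hvu : v * u = 1) (hu : u ∈ I) : I = ⊤ :=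
  Submodule.eq_top_iff'.2 fun a => by simpa [mul_assoc, hvu] using hmul (a * v) u hu

theorem Module.Basis.eq_sum_repr_four {c b : H} (bas : Module.Basis (Fin 4) F H)
    (hbas : bas 0 = 1 ∧ bas 1 = c ∧ bas 2 = b ∧ bas 3 = c * b) (x : H) :
    x = bas.repr x 0 • (1 : H) + bas.repr x 1 • c + bas.repr x 2 • b + bas.repr x 3 • (c * b) := by
  obtain ⟨h0, h1, h2, h3⟩ := hbas
  conv_lhs => rw [← bas.sum_repr x, Fin.sum_univ_four, h0, h1, h2, h3]

theorem one_mem_or_mem_of_ne_zero {c b x : H} {r₀ r₁ r₂ r₃ : F}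
    (hx : x = r₀ • (1 : H) + r₁ • c + r₂ • b + r₃ • (c * b)) (hx0 : x ≠ 0)
    {gc gb gcb : H →ₗ[F] H}
    (hgc : gc 1 = 0 ∧ gc c = c ∧ gc b = 0 ∧ gc (c * b) = c * b)
    (hgb : gb 1 = 0 ∧ gb c = 0 ∧ gb b = c ∧ gb (c * b) = 0)
    (hgcb : gcb 1 = 0 ∧ gcb c = 0 ∧ gcb b = 0 ∧ gcb (c * b) = 1)
    {I : Submodule F H} (hxI : x ∈ I) (hgcx : gc x ∈ I) (hgbx : gb x ∈ I) (hgcbx : gcb x ∈ I) :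
    (1 : H) ∈ I ∨ c ∈ I := by
  by_cases h₃ : r₃ = 0
  swap
  · have hval : gcb x = r₃ • (1 : H) := by simp [hx, hgcb]
    exact .inl ((I.smul_mem_iff h₃).1 (hval ▸ hgcbx))
  by_cases h₂ : r₂ = 0
  swap
  · have hval : gb x = r₂ • c := by simp [hx, h₃, hgb]
    exact .inr ((I.smul_mem_iff h₂).1 (hval ▸ hgbx))
  by_cases h₁ : r₁ = 0
  swap
  · have hval : gc x = r₁ • c := by simp [hx, h₂, h₃, hgc]
    exact .inr ((I.smul_mem_iff h₁).1 (hval ▸ hgcx))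
  have hval : x = r₀ • (1 : H) := by simp [hx, h₁, h₂, h₃]
  have h₀ : r₀ ≠ 0 := by rintro rfl; exact hx0 (by simpa using hval)
  exact .inl ((I.smul_mem_iff h₀).1 (hval ▸ hxI))

end

theorem sweedler_Hstar_simple_general (F : Type*) [Field F]
    (H : Type*) [Ring H] [Algebra F H]
    (c b : H) (hc : c ^ 2 = 1)
    (bas : Module.Basis (Fin 4) F H)
    (hbas : bas 0 = 1 ∧ bas 1 = c ∧ bas 2 = b ∧ bas 3 = c * b)
    (g₁ gc gb gcb : H →ₗ[F] H)
    (hgc : gc 1 = 0 ∧ gc c = c ∧ gc b = 0 ∧ gc (c * b) = c * b)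
    (hgb : gb 1 = 0 ∧ gb c = 0 ∧ gb b = c ∧ gb (c * b) = 0)
    (hgcb : gcb 1 = 0 ∧ gcb c = 0 ∧ gcb b = 0 ∧ gcb (c * b) = 1) :
    ∀ I : Submodule F H,
      (∀ a : H, ∀ x ∈ I, a * x ∈ I ∧ x * a ∈ I) →
      (∀ x ∈ I, g₁ x ∈ I ∧ gc x ∈ I ∧ gb x ∈ I ∧ gcb x ∈ I) →
      I = ⊥ ∨ I = ⊤ := by
  intro I hmul hinv
  refine or_iff_not_imp_left.2 fun hI => ?_
  have hleft : ∀ a : H, ∀ x ∈ I, a * x ∈ I := fun a x hx => (hmul a x hx).1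
  obtain ⟨x, hxI, hx0⟩ := Submodule.exists_mem_ne_zero_of_ne_bot hI
  obtain ⟨-, hgcx, hgbx, hgcbx⟩ := hinv x hxI
  rcases one_mem_or_mem_of_ne_zero (bas.eq_sum_repr_four hbas x) hx0 hgc hgb hgcb
      hxI hgcx hgbx hgcbx with h1 | hcI
  · exact I.eq_top_of_mul_eq_one_of_mem hleft (one_mul 1) h1
  · exact I.eq_top_of_mul_eq_one_of_mem hleft (by rw [← sq, hc]) hcI

/-- Sweedler's 4-dimensional Hopf algebra `H` (with basis `1, c, b, cb`, `c² = 1`, `b² = 0`,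
`bc = -cb`) is `H*`-simple under the action of its dual, given on the dual basis
`g₁, g_c, g_b, g_{cb}` by the action table: any two-sided ideal invariant under
`g₁, g_c, g_b, g_{cb}` is `0` or `H`. -/
theorem sweedler_Hstar_simple (F : Type*) [Field F] [CharZero F]
    (H : Type*) [Ring H] [Algebra F H]
    (c b : H) (hc : c ^ 2 = 1) (hb : b ^ 2 = 0) (hbc : b * c = -(c * b))
    (bas : Module.Basis (Fin 4) F H)
    (hbas : bas 0 = 1 ∧ bas 1 = c ∧ bas 2 = b ∧ bas 3 = c * b)
    (g₁ gc gb gcb : H →ₗ[F] H)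
    (hg₁ : g₁ 1 = 1 ∧ g₁ c = 0 ∧ g₁ b = b ∧ g₁ (c * b) = 0)
    (hgc : gc 1 = 0 ∧ gc c = c ∧ gc b = 0 ∧ gc (c * b) = c * b)
    (hgb : gb 1 = 0 ∧ gb c = 0 ∧ gb b = c ∧ gb (c * b) = 0)
    (hgcb : gcb 1 = 0 ∧ gcb c = 0 ∧ gcb b = 0 ∧ gcb (c * b) = 1) :
    ∀ I : Submodule F H,
      (∀ a : H, ∀ x ∈ I, a * x ∈ I ∧ x * a ∈ I) →
      (∀ x ∈ I, g₁ x ∈ I ∧ gc x ∈ I ∧ gb x ∈ I ∧ gcb x ∈ I) →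
      I = ⊥ ∨ I = ⊤ :=
  sweedler_Hstar_simple_general F H c b hc bas hbas g₁ gc gb gcb hgc hgb hgcb
end

section
/- Let H be Sweedler's 4-dimensional Hopf algebra over a field F of characteristic 0 with the H*-action given above. The multilinear H*-polynomial f₁(x₁,x₂,x₃,x₄) = Σ_{σ∈S₄} sign(σ) x_{σ(1)}^{g₁} x_{σ(2)}^{g_c} x_{σ(3)}^{g_b} x_{σ(4)}^{g_{cb}}, evaluated at (x₁,x₂,x₃,x₄) = (1, c, b, cb), equals 1. In particular f₁ is alternating in its four variables and is not an H*-identity of H. -/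
/-!
`f₁` is the alternatization of the ordered product `x₁^{g₁} x₂^{g_c} x₃^{g_b} x₄^{g_{cb}}`, so it
vanishes whenever two arguments coincide. At `(1, c, b, cb)` the action is triangular: the `k`-th
functional kills every argument listed before the `k`-th one, and every non-identity permutation
sends some index below itself, so only the identity term `1 · c · c · 1 = 1` survives.
-/

open Equiv

theorem Equiv.Perm.sum_sign_smul_comp_eq_zero_of_eq {ι α M : Type*} [Fintype ι] [DecidableEq ι]
    [AddCommGroup M] (F : (ι → α) → M) {x : ι → α} {i j : ι} (hij : i ≠ j) (hx : x i = x j) :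
    ∑ σ : Perm ι, (Perm.sign σ : ℤ) • F (x ∘ σ) = 0 :=
  Finset.sum_involution (fun σ _ => swap i j * σ)
    (fun σ _ => by simp [Perm.sign_swap hij, Function.comp_def, apply_swap_eq_self hx])
    (fun _ _ _ => (not_congr swap_mul_eq_iff).mpr hij) (fun _ _ => Finset.mem_univ _)
    fun σ _ => swap_mul_involutive i j σ

theorem Equiv.Perm.exists_apply_lt_of_ne_one {n : ℕ} {σ : Perm (Fin n)} (hσ : σ ≠ 1) :
    ∃ k, σ k < k := by
  by_contra! h
  -- `σ` permutes the summands of `∑ k`, so `k ≤ σ k` for all `k` forces equality everywhere.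
  have hsum : ∑ k : Fin n, (k : ℕ) = ∑ k, (σ k : ℕ) := (Equiv.sum_comp σ (fun k => (k : ℕ))).symm
  refine hσ (Perm.ext fun k => Fin.ext ?_)
  exact ((Finset.sum_eq_sum_iff_of_le fun k _ => Fin.le_def.1 (h k)).1 hsum k
    (Finset.mem_univ k)).symm

theorem Equiv.Perm.sum_sign_smul_prod_ofFn_of_triangular {R α : Type*} [Ring R] {n : ℕ}
    (φ : Fin n → α → R) (x : Fin n → α) (h : ∀ k l, l < k → φ k (x l) = 0) :
    ∑ σ : Perm (Fin n), (Perm.sign σ : ℤ) • (List.ofFn fun k => φ k (x (σ k))).prod =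
      (List.ofFn fun k => φ k (x k)).prod := by
  rw [Finset.sum_eq_single 1 _ (by simp)]
  · simp
  intro σ _ hσ
  obtain ⟨k, hk⟩ := Perm.exists_apply_lt_of_ne_one hσ
  rw [List.prod_eq_zero (List.mem_ofFn.2 ⟨k, h k (σ k) hk⟩), smul_zero]

theorem sweedler_alternating_polynomial_general (F : Type*) [Field F]
    (H : Type*) [Ring H] [Algebra F H]
    (c b : H) (hc : c ^ 2 = 1)
    (bas : Module.Basis (Fin 4) F H)
    (g₁ gc gb gcb : H →ₗ[F] H)
    (hg₁ : g₁ 1 = 1 ∧ g₁ c = 0 ∧ g₁ b = b ∧ g₁ (c * b) = 0)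
    (hgc : gc 1 = 0 ∧ gc c = c ∧ gc b = 0 ∧ gc (c * b) = c * b)
    (hgb : gb 1 = 0 ∧ gb c = 0 ∧ gb b = c ∧ gb (c * b) = 0)
    (hgcb : gcb 1 = 0 ∧ gcb c = 0 ∧ gcb b = 0 ∧ gcb (c * b) = 1) :
    ∀ f₁ : (Fin 4 → H) → H,
      f₁ = (fun x => ∑ σ : Perm (Fin 4), (Perm.sign σ : ℤ) •
        (g₁ (x (σ 0)) * gc (x (σ 1)) * gb (x (σ 2)) * gcb (x (σ 3)))) →
      f₁ ![1, c, b, c * b] = 1 ∧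
      (∀ (x : Fin 4 → H) (i j : Fin 4), i ≠ j → x i = x j → f₁ x = 0) ∧
      (∃ x : Fin 4 → H, f₁ x ≠ 0) := by
  intro f₁ hf
  set φ : Fin 4 → H → H := ![g₁, gc, gb, gcb] with hφ
  have hf_ofFn : ∀ x, f₁ x = ∑ σ : Perm (Fin 4),
      (Perm.sign σ : ℤ) • (List.ofFn fun k => φ k (x (σ k))).prod := by
    intro x
    simp [hf, hφ, List.ofFn_succ, mul_assoc]
  have htriangular : ∀ k l, l < k → φ k (![1, c, b, c * b] l) = 0 := by
    intro k l hlk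
    fin_cases k <;> fin_cases l <;> simp_all
  have hval : f₁ ![1, c, b, c * b] = 1 := by
    rw [hf_ofFn, Perm.sum_sign_smul_prod_ofFn_of_triangular φ _ htriangular]
    simp [hφ, List.ofFn_succ, hg₁.1, hgc.2.1, hgb.2.2.1, hgcb.2.2.2, ← sq, hc]
  have : Nontrivial H := nontrivial_of_ne _ _ (bas.ne_zero 0)
  refine ⟨hval, fun x i j hij hx => ?_, ⟨_, hval ▸ one_ne_zero⟩⟩
  rw [hf_ofFn]
  exact Perm.sum_sign_smul_comp_eq_zero_of_eq (fun y => (List.ofFn fun k => φ k (y k)).prod) hij hx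

/-- In Sweedler's 4-dimensional Hopf algebra `H` with the `H*`-action of the dual basis
`g₁, g_c, g_b, g_{cb}`, the multilinear `H*`-polynomial
`f₁(x₁,x₂,x₃,x₄) = ∑_{σ∈S₄} sign σ · x_{σ(1)}^{g₁} x_{σ(2)}^{g_c} x_{σ(3)}^{g_b} x_{σ(4)}^{g_{cb}}`
takes the value `1` at `(1, c, b, cb)`; in particular it is alternating in its four
variables and is not an `H*`-identity of `H`. -/
theorem sweedler_alternating_polynomial (F : Type*) [Field F] [CharZero F]
    (H : Type*) [Ring H] [Algebra F H]
    (c b : H) (hc : c ^ 2 = 1) (hb : b ^ 2 = 0) (hbc : b * c = -(c * b))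
    (bas : Module.Basis (Fin 4) F H)
    (hbas : bas 0 = 1 ∧ bas 1 = c ∧ bas 2 = b ∧ bas 3 = c * b)
    (g₁ gc gb gcb : H →ₗ[F] H)
    (hg₁ : g₁ 1 = 1 ∧ g₁ c = 0 ∧ g₁ b = b ∧ g₁ (c * b) = 0)
    (hgc : gc 1 = 0 ∧ gc c = c ∧ gc b = 0 ∧ gc (c * b) = c * b)
    (hgb : gb 1 = 0 ∧ gb c = 0 ∧ gb b = c ∧ gb (c * b) = 0)
    (hgcb : gcb 1 = 0 ∧ gcb c = 0 ∧ gcb b = 0 ∧ gcb (c * b) = 1) :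
    ∀ f₁ : (Fin 4 → H) → H,
      f₁ = (fun x => ∑ σ : Perm (Fin 4), (Perm.sign σ : ℤ) •
        (g₁ (x (σ 0)) * gc (x (σ 1)) * gb (x (σ 2)) * gcb (x (σ 3)))) →
      f₁ ![1, c, b, c * b] = 1 ∧
      (∀ (x : Fin 4 → H) (i j : Fin 4), i ≠ j → x i = x j → f₁ x = 0) ∧
      (∃ x : Fin 4 → H, f₁ x ≠ 0) :=
  sweedler_alternating_polynomial_general F H c b hc bas g₁ gc gb gcb hg₁ hgc hgb hgcb
end

section
/- Let H be Sweedler's 4-dimensional Hopf algebra over a field F of characteristic 0 with the H*-action of the previous statements. Then the H*-codimension sequence satisfies c_n^{H*}(H) ≤ 4^{n+1} for all n, and there exist C > 0 and r ∈ ℝ with C n^r 4^n ≤ c_n^{H*}(H) for all n ∈ ℕ; consequently the Hopf PI-exponent lim_{n→∞} (c_n^{H*}(H))^{1/n} exists and equals 4. -/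
open Equiv Filter

/-- The set of evaluations on `H` of multilinear `H*`-monomials
`x_{σ(1)}^{h₁} ⋯ x_{σ(n)}^{h_n}`, where the `h_i` range over the span of the dual basis
operators `g₁, g_c, g_b, g_{cb}` (i.e. over all of `H*`). Its span realizes
`P_n^{H*}/(P_n^{H*} ∩ Id^{H*}(H))`. -/
def sweedlerMonomials (F : Type*) [Field F] (H : Type*) [Ring H] [Algebra F H]
    (g₁ gc gb gcb : H →ₗ[F] H) (n : ℕ) : Set ((Fin n → H) → H) :=
  { f | ∃ (σ : Perm (Fin n)) (h : Fin n → (H →ₗ[F] H)),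
      (∀ i, h i ∈ Submodule.span F {g₁, gc, gb, gcb}) ∧
      f = fun x => (List.ofFn fun i => h i (x (σ i))).prod }

/-!
Evaluating a multilinear monomial on `H` gives a multilinear map `Hⁿ → H`, and these maps form
a space of dimension `4ⁿ⁺¹`; this is the upper bound.

For the lower bound, the counit `ε : H → F` (`c ↦ 1`, `b ↦ 0`) is an algebra homomorphism that
pairs the operators `g₁, g_c, g_b, g_{cb}` biorthogonally with the basis `1, c, b, cb`:
`ε (g_k e_j) = δ_{kj}`. As `ε` is multiplicative, `ε (x₁^{g_{k₁}} ⋯ xₙ^{g_{kₙ}})` evaluated at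
`(e_{j₁}, …, e_{jₙ})` is `∏ δ_{kᵢ jᵢ}`, so these `4ⁿ` monomials are linearly independent.
Squeezing `c_n` between `4ⁿ` and `4ⁿ⁺¹` gives the exponent `4`.
-/

open Module

namespace MultilinearMap

variable {R ι : Type*} {M₁ : ι → Type*} {M₂ : Type*} [CommSemiring R]
  [∀ i, AddCommMonoid (M₁ i)] [∀ i, Module R (M₁ i)] [AddCommMonoid M₂] [Module R M₂]

def coeLinearMap : MultilinearMap R M₁ M₂ →ₗ[R] ((∀ i, M₁ i) → M₂) where
  toFun := (⇑)
  map_add' _ _ := rfl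
  map_smul' _ _ := rfl

end MultilinearMap

theorem finrank_multilinearMap_le (F M N κ : Type*) [Field F] [AddCommGroup M] [Module F M]
    [AddCommGroup N] [Module F N] [Module.Finite F M] [Module.Finite F N] [Fintype κ] :
    finrank F (MultilinearMap F (fun _ : κ => M) N) ≤
      finrank F M ^ Fintype.card κ * finrank F N := by
  classical
  let e := Module.finBasis F M
  let evalBasis : MultilinearMap F (fun _ : κ => M) N →ₗ[F] ((κ → Fin (finrank F M)) → N) :=
    { toFun m w := m (e ∘ w)
      map_add' _ _ := rfl
      map_smul' _ _ := rfl }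
  have hinj : Function.Injective evalBasis := fun m₁ m₂ h =>
    Basis.ext_multilinear (fun _ => e) fun w => congrFun h w
  calc finrank F (MultilinearMap F (fun _ : κ => M) N)
      ≤ finrank F ((κ → Fin (finrank F M)) → N) := LinearMap.finrank_le_finrank_of_injective hinj
    _ = finrank F M ^ Fintype.card κ * finrank F N := by
      simp [Module.finrank_pi_fintype]

theorem linearIndependent_listProd_apply {R A ι : Type*} [CommSemiring R] [Semiring A]
    [Algebra R A] [DecidableEq ι] (ε : A →ₐ[R] R) (G : ι → A →ₗ[R] A) (s : ι → A)
    (hGs : ∀ k j, ε (G k (s j)) = if k = j then 1 else 0) (n : ℕ) :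
    LinearIndependent R fun (v : Fin n → ι) (x : Fin n → A) =>
      (List.ofFn fun i => G (v i) (x i)).prod := by
  let pairing := LinearMap.funLeft R R (fun (w : Fin n → ι) => s ∘ w) ∘ₗ
    ε.toLinearMap.compLeft (Fin n → A)
  refine LinearIndependent.of_comp pairing ?_
  convert Pi.linearIndependent_single_one (Fin n → ι) R using 1
  funext v w
  simp [pairing, map_list_prod, List.prod_ofFn, hGs, Finset.prod_boole, Pi.single_apply,
    funext_iff, eq_comm]

theorem tendsto_rpow_one_div_of_pow_le_of_le_mul_pow {a : ℕ → ℝ} {q C : ℝ} (hq : 0 ≤ q)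
    (hlow : ∀ n, q ^ n ≤ a n) (hup : ∀ n, a n ≤ C * q ^ n) :
    Tendsto (fun n : ℕ => a n ^ (1 / (n : ℝ))) atTop (nhds q) := by
  have hC : 0 < C := by simpa using zero_lt_one.trans_le ((hlow 0).trans (hup 0))
  have hCroot : Tendsto (fun n : ℕ => C ^ (1 / (n : ℝ)) * q) atTop (nhds q) := by
    have := (Real.continuousAt_const_rpow hC.ne').tendsto.comp tendsto_one_div_atTop_nhds_zero_nat
    simpa using this.mul_const q
  refine tendsto_of_tendsto_of_tendsto_of_le_of_le' tendsto_const_nhds hCroot ?_ ?_ <;>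
    filter_upwards [eventually_ne_atTop 0] with n hn <;> simp only [one_div]
  · calc q = (q ^ n) ^ (n⁻¹ : ℝ) := (Real.pow_rpow_inv_natCast hq hn).symm
      _ ≤ a n ^ (n⁻¹ : ℝ) := by gcongr; exact hlow n
  · calc a n ^ (n⁻¹ : ℝ) ≤ (C * q ^ n) ^ (n⁻¹ : ℝ) :=
          Real.rpow_le_rpow ((pow_nonneg hq n).trans (hlow n)) (hup n) (by positivity)
      _ = C ^ (n⁻¹ : ℝ) * q := by
          rw [Real.mul_rpow hC.le (pow_nonneg hq n), Real.pow_rpow_inv_natCast hq hn]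

section SweedlerMonomials

variable {F H : Type*} [Field F] [Ring H] [Algebra F H]

theorem span_sweedlerMonomials_le_range (g₁ gc gb gcb : H →ₗ[F] H) (n : ℕ) :
    Submodule.span F (sweedlerMonomials F H g₁ gc gb gcb n) ≤
      LinearMap.range (MultilinearMap.coeLinearMap (R := F) (M₁ := fun _ : Fin n => H)) := by
  rw [Submodule.span_le]
  rintro f ⟨σ, h, -, rfl⟩
  exact ⟨((MultilinearMap.mkPiAlgebraFin F n H).compLinearMap h).domDomCongr σ, rfl⟩

theorem finrank_span_sweedlerMonomials_le [Module.Finite F H] (g₁ gc gb gcb : H →ₗ[F] H)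
    (n : ℕ) :
    finrank F (Submodule.span F (sweedlerMonomials F H g₁ gc gb gcb n)) ≤
      finrank F H ^ (n + 1) :=
  calc _ ≤ finrank F (LinearMap.range
          (MultilinearMap.coeLinearMap (R := F) (M₁ := fun _ : Fin n => H) (M₂ := H))) :=
        Submodule.finrank_mono (span_sweedlerMonomials_le_range g₁ gc gb gcb n)
    _ ≤ finrank F (MultilinearMap F (fun _ : Fin n => H) H) := LinearMap.finrank_range_le _
    _ ≤ finrank F H ^ Fintype.card (Fin n) * finrank F H := finrank_multilinearMap_le ..
    _ = finrank F H ^ (n + 1) := by rw [Fintype.card_fin, pow_succ]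

namespace Sweedler

variable {c b : H}

theorem exists_counit (hc : c ^ 2 = 1) (hb : b ^ 2 = 0) (hbc : b * c = -(c * b))
    {bas : Basis (Fin 4) F H} (hbas : bas 0 = 1 ∧ bas 1 = c ∧ bas 2 = b ∧ bas 3 = c * b) :
    ∃ ε : H →ₐ[F] F, ε c = 1 ∧ ε b = 0 := by
  obtain ⟨h0, h1, h2, h3⟩ := hbas
  let φ := bas.constr F (![1, 1, 0, 0] : Fin 4 → F)
  have hφ : φ 1 = 1 ∧ φ c = 1 ∧ φ b = 0 ∧ φ (c * b) = 0 := by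
    rw [← h3, ← h0, ← h1, ← h2]
    simp [φ]
  have hcc : c * c = 1 := by rw [← sq, hc]
  have hbb : b * b = 0 := by rw [← sq, hb]
  have hccb : c * (c * b) = b := by rw [← mul_assoc, hcc, one_mul]
  have hbcb : b * (c * b) = 0 := by rw [← mul_assoc, hbc, neg_mul, mul_assoc, hbb, mul_zero, neg_zero]
  have hcbc : c * b * c = -b := by rw [mul_assoc, hbc, mul_neg, hccb]
  have hcbb : c * b * b = 0 := by rw [mul_assoc, hbb, mul_zero]
  have hcbcb : c * b * (c * b) = 0 := by rw [mul_assoc, hbcb, mul_zero]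
  have hmul : (LinearMap.mul F H).compr₂ φ = (LinearMap.mul F F).compl₁₂ φ φ := by
    refine LinearMap.ext_basis bas bas fun i j => ?_
    fin_cases i <;> fin_cases j <;>
      simp [h0, h1, h2, h3, hφ, hcc, hbb, hbc, hccb, hbcb, hcbc, hcbb, hcbcb]
  exact ⟨AlgHom.ofLinearMap φ hφ.1 fun x y => LinearMap.congr_fun₂ hmul x y, hφ.2.1, hφ.2.2.1⟩

theorem counit_dual_apply_basis {ε : H →ₐ[F] F} (hεc : ε c = 1) (hεb : ε b = 0)
    {bas : Basis (Fin 4) F H} (hbas : bas 0 = 1 ∧ bas 1 = c ∧ bas 2 = b ∧ bas 3 = c * b)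
    {g₁ gc gb gcb : H →ₗ[F] H}
    (hg₁ : g₁ 1 = 1 ∧ g₁ c = 0 ∧ g₁ b = b ∧ g₁ (c * b) = 0)
    (hgc : gc 1 = 0 ∧ gc c = c ∧ gc b = 0 ∧ gc (c * b) = c * b)
    (hgb : gb 1 = 0 ∧ gb c = 0 ∧ gb b = c ∧ gb (c * b) = 0)
    (hgcb : gcb 1 = 0 ∧ gcb c = 0 ∧ gcb b = 0 ∧ gcb (c * b) = 1) (k j : Fin 4) :
    ε (![g₁, gc, gb, gcb] k (bas j)) = if k = j then 1 else 0 := by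
  obtain ⟨h0, h1, h2, h3⟩ := hbas
  fin_cases k <;> fin_cases j <;> simp [h0, h1, h2, h3, hg₁, hgc, hgb, hgcb, hεc, hεb]

end Sweedler

theorem four_pow_le_finrank_span_sweedlerMonomials {c b : H} (hc : c ^ 2 = 1) (hb : b ^ 2 = 0)
    (hbc : b * c = -(c * b)) {bas : Basis (Fin 4) F H}
    (hbas : bas 0 = 1 ∧ bas 1 = c ∧ bas 2 = b ∧ bas 3 = c * b) {g₁ gc gb gcb : H →ₗ[F] H}
    (hg₁ : g₁ 1 = 1 ∧ g₁ c = 0 ∧ g₁ b = b ∧ g₁ (c * b) = 0)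
    (hgc : gc 1 = 0 ∧ gc c = c ∧ gc b = 0 ∧ gc (c * b) = c * b)
    (hgb : gb 1 = 0 ∧ gb c = 0 ∧ gb b = c ∧ gb (c * b) = 0)
    (hgcb : gcb 1 = 0 ∧ gcb c = 0 ∧ gcb b = 0 ∧ gcb (c * b) = 1) (n : ℕ) :
    4 ^ n ≤ finrank F (Submodule.span F (sweedlerMonomials F H g₁ gc gb gcb n)) := by
  have : Module.Finite F H := Module.Finite.of_basis bas
  have : Module.Finite F (Submodule.span F (sweedlerMonomials F H g₁ gc gb gcb n)) :=
    Submodule.finiteDimensional_of_le (span_sweedlerMonomials_le_range g₁ gc gb gcb n)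
  obtain ⟨ε, hεc, hεb⟩ := Sweedler.exists_counit hc hb hbc hbas
  have hli := linearIndependent_listProd_apply ε ![g₁, gc, gb, gcb] bas
    (Sweedler.counit_dual_apply_basis hεc hεb hbas hg₁ hgc hgb hgcb) n
  have hmem : Set.range (fun (v : Fin n → Fin 4) (x : Fin n → H) =>
      (List.ofFn fun i => ![g₁, gc, gb, gcb] (v i) (x i)).prod) ⊆
        sweedlerMonomials F H g₁ gc gb gcb n := by
    have hG (k : Fin 4) : ![g₁, gc, gb, gcb] k ∈ ({g₁, gc, gb, gcb} : Set (H →ₗ[F] H)) := by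
      fin_cases k <;> simp
    rintro _ ⟨v, rfl⟩
    exact ⟨Equiv.refl _, fun i => ![g₁, gc, gb, gcb] (v i),
      fun i => Submodule.subset_span (hG (v i)), rfl⟩
  calc 4 ^ n = finrank F (Submodule.span F (Set.range _)) := by
        rw [finrank_span_eq_card hli]; simp
    _ ≤ _ := Submodule.finrank_mono (Submodule.span_mono hmem)

end SweedlerMonomials

theorem sweedler_codim_growth_general (F : Type*) [Field F]
    (H : Type*) [Ring H] [Algebra F H]
    (c b : H) (hc : c ^ 2 = 1) (hb : b ^ 2 = 0) (hbc : b * c = -(c * b))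
    (bas : Module.Basis (Fin 4) F H)
    (hbas : bas 0 = 1 ∧ bas 1 = c ∧ bas 2 = b ∧ bas 3 = c * b)
    (g₁ gc gb gcb : H →ₗ[F] H)
    (hg₁ : g₁ 1 = 1 ∧ g₁ c = 0 ∧ g₁ b = b ∧ g₁ (c * b) = 0)
    (hgc : gc 1 = 0 ∧ gc c = c ∧ gc b = 0 ∧ gc (c * b) = c * b)
    (hgb : gb 1 = 0 ∧ gb c = 0 ∧ gb b = c ∧ gb (c * b) = 0)
    (hgcb : gcb 1 = 0 ∧ gcb c = 0 ∧ gcb b = 0 ∧ gcb (c * b) = 1) :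
    (∀ n : ℕ, Module.finrank F
        ↥(Submodule.span F (sweedlerMonomials F H g₁ gc gb gcb n)) ≤ 4 ^ (n + 1)) ∧
    (∃ (C : ℝ) (r : ℝ), 0 < C ∧ ∀ n : ℕ, 0 < n →
      C * (n : ℝ) ^ r * 4 ^ n ≤
        (Module.finrank F ↥(Submodule.span F (sweedlerMonomials F H g₁ gc gb gcb n)) : ℝ)) ∧
    Tendsto (fun n : ℕ =>
      ((Module.finrank F ↥(Submodule.span F (sweedlerMonomials F H g₁ gc gb gcb n)) : ℝ))
        ^ (1 / (n : ℝ))) atTop (nhds 4) := by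
  have : Module.Finite F H := Module.Finite.of_basis bas
  have hdim : finrank F H = 4 := by simp [finrank_eq_card_basis bas]
  have upper (n : ℕ) := hdim ▸ finrank_span_sweedlerMonomials_le g₁ gc gb gcb n
  have lower := four_pow_le_finrank_span_sweedlerMonomials hc hb hbc hbas hg₁ hgc hgb hgcb
  refine ⟨upper, ⟨1, 0, one_pos, fun n _ => by simpa using (Nat.cast_le (α := ℝ)).2 (lower n)⟩,
    tendsto_rpow_one_div_of_pow_le_of_le_mul_pow (C := 4) zero_le_four
      (fun n => mod_cast lower n) (fun n => ?_)⟩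
  rw [← pow_succ']
  exact_mod_cast upper n

/-- For Sweedler's 4-dimensional Hopf algebra `H` with the action of its dual `H*`,
the `H*`-codimensions satisfy `c_n^{H*}(H) ≤ 4^{n+1}` and `C n^r 4^n ≤ c_n^{H*}(H)`
for suitable `C > 0`, `r ∈ ℝ`; consequently the Hopf PI-exponent
`lim_{n→∞} c_n^{H*}(H)^{1/n}` exists and equals `4`. -/
theorem sweedler_codim_growth (F : Type*) [Field F] [CharZero F]
    (H : Type*) [Ring H] [Algebra F H]
    (c b : H) (hc : c ^ 2 = 1) (hb : b ^ 2 = 0) (hbc : b * c = -(c * b))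
    (bas : Module.Basis (Fin 4) F H)
    (hbas : bas 0 = 1 ∧ bas 1 = c ∧ bas 2 = b ∧ bas 3 = c * b)
    (g₁ gc gb gcb : H →ₗ[F] H)
    (hg₁ : g₁ 1 = 1 ∧ g₁ c = 0 ∧ g₁ b = b ∧ g₁ (c * b) = 0)
    (hgc : gc 1 = 0 ∧ gc c = c ∧ gc b = 0 ∧ gc (c * b) = c * b)
    (hgb : gb 1 = 0 ∧ gb c = 0 ∧ gb b = c ∧ gb (c * b) = 0)
    (hgcb : gcb 1 = 0 ∧ gcb c = 0 ∧ gcb b = 0 ∧ gcb (c * b) = 1) :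
    (∀ n : ℕ, Module.finrank F
        ↥(Submodule.span F (sweedlerMonomials F H g₁ gc gb gcb n)) ≤ 4 ^ (n + 1)) ∧
    (∃ (C : ℝ) (r : ℝ), 0 < C ∧ ∀ n : ℕ, 0 < n →
      C * (n : ℝ) ^ r * 4 ^ n ≤
        (Module.finrank F ↥(Submodule.span F (sweedlerMonomials F H g₁ gc gb gcb n)) : ℝ)) ∧
    Tendsto (fun n : ℕ =>
      ((Module.finrank F ↥(Submodule.span F (sweedlerMonomials F H g₁ gc gb gcb n)) : ℝ))
        ^ (1 / (n : ℝ))) atTop (nhds 4) :=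
  sweedler_codim_growth_general F H c b hc hb hbc bas hbas g₁ gc gb gcb hg₁ hgc hgb hgcb
end
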